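/- arXiv:2401.03544 — 3 statements merged into one kernel-verified Lean document; each statement's English description precedes it below -/
import Mathlib

section
/- Let u : ℝ → ℝ be a G-Lipschitz function and N ⊂ ℝ a compact set with Lebesgue measure zero. Then the derivative of u vanishes at Lebesgue density points of u⁻¹(N): if t is a point of density 1 of u⁻¹(N) and u is differentiable at t, then u'(t) = 0. -/
/-! If `u'(t) = d ≠ 0`, then on `[t, t + ε]` the function `u` sweeps an interval of length
`≈ |d| ε`. As `N` is null, almost all of that interval is attained at points outside `u⁻¹(N)`,
so the Lipschitz bound gives `|d| ε ≲ G · |[t, t + ε] \ u⁻¹(N)|`, which is `o(ε)` because `t` is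
a density point of `u⁻¹(N)`. -/

open MeasureTheory Filter Set Topology
open scoped NNReal ENNReal

theorem LipschitzWith.volume_image_le {K : ℝ≥0} {f : ℝ → ℝ} (hf : LipschitzWith K f)
    (s : Set ℝ) : volume (f '' s) ≤ K * volume s := by
  simpa [hausdorffMeasure_real] using hf.hausdorffMeasure_image_le zero_le_one s

theorem LipschitzWith.abs_sub_le_mul_volumeReal_Icc_sdiff_preimage {K : ℝ≥0} {f : ℝ → ℝ}
    (hf : LipschitzWith K f) {N : Set ℝ} (hN : volume N = 0) {a b : ℝ} (hab : a ≤ b) :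
    |f b - f a| ≤ K * volume.real (Icc a b \ f ⁻¹' N) := by
  have hcover : uIcc (f a) (f b) \ N ⊆ f '' (Icc a b \ f ⁻¹' N) := by
    rintro y ⟨hy, hyN⟩
    obtain ⟨x, hx, rfl⟩ := intermediate_value_uIcc hf.continuous.continuousOn hy
    exact ⟨x, ⟨uIcc_of_le hab ▸ hx, hyN⟩, rfl⟩
  have hmeasure : ENNReal.ofReal |f b - f a| ≤ K * volume (Icc a b \ f ⁻¹' N) :=
    calc ENNReal.ofReal |f b - f a| = volume (uIcc (f a) (f b) \ N) := by
          rw [measure_sdiff_null hN, Real.volume_interval, abs_sub_comm]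
      _ ≤ volume (f '' (Icc a b \ f ⁻¹' N)) := measure_mono hcover
      _ ≤ K * volume (Icc a b \ f ⁻¹' N) := hf.volume_image_le _
  have hfin : volume (Icc a b \ f ⁻¹' N) ≠ ∞ :=
    measure_ne_top_of_subset sdiff_subset (by simp)
  simpa [ENNReal.toReal_mul, measureReal_def] using
    (ENNReal.ofReal_le_iff_le_toReal (ENNReal.mul_ne_top ENNReal.coe_ne_top hfin)).mp hmeasure

theorem tendsto_volumeReal_Icc_sdiff_div_of_density_one {S : Set ℝ} (hS : MeasurableSet S) {t : ℝ}
    (hdens : Tendsto (fun ε : ℝ => volume (S ∩ Icc (t - ε) (t + ε)) / ENNReal.ofReal (2 * ε))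
      (𝓝[>] 0) (𝓝 1)) :
    Tendsto (fun ε : ℝ => volume.real (Icc (t - ε) (t + ε) \ S) / (2 * ε)) (𝓝[>] 0) (𝓝 0) := by
  have hcompl : Tendsto (fun ε : ℝ => volume (Icc (t - ε) (t + ε) \ S) / ENNReal.ofReal (2 * ε))
      (𝓝[>] 0) (𝓝 0) := by
    have h := (ENNReal.Tendsto.sub tendsto_const_nhds hdens (Or.inl ENNReal.one_ne_top) :
      Tendsto (fun ε : ℝ => 1 - volume (S ∩ Icc (t - ε) (t + ε)) / ENNReal.ofReal (2 * ε))
        (𝓝[>] 0) (𝓝 (1 - 1)))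
    rw [tsub_self] at h
    refine h.congr' ?_
    filter_upwards [self_mem_nhdsWithin] with ε (hε : 0 < ε)
    have hvol : volume (Icc (t - ε) (t + ε)) = ENNReal.ofReal (2 * ε) := by
      rw [Real.volume_Icc]; ring_nf
    have hpos : ENNReal.ofReal (2 * ε) ≠ 0 := (ENNReal.ofReal_pos.mpr (by positivity)).ne'
    rw [inter_comm S, ← sdiff_self_inter, measure_sdiff inter_subset_left
      (measurableSet_Icc.inter hS).nullMeasurableSet
      (measure_ne_top_of_subset inter_subset_left (by simp)), hvol,
      ENNReal.sub_div (fun _ _ => hpos), ENNReal.div_self hpos ENNReal.ofReal_ne_top]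
  have hreal := (ENNReal.tendsto_toReal ENNReal.zero_ne_top).comp hcompl
  refine hreal.congr' ?_
  filter_upwards [self_mem_nhdsWithin] with ε (hε : 0 < ε)
  simp [ENNReal.toReal_div, measureReal_def, hε.le]

theorem stmt_0_general (u : ℝ → ℝ) (G : ℝ)
    (hLip : LipschitzWith (Real.toNNReal G) u)
    (N : Set ℝ) (hN : IsCompact N) (hN0 : volume N = 0)
    (t : ℝ)
    (hdens : Tendsto (fun ε : ℝ =>
        volume (u ⁻¹' N ∩ Icc (t - ε) (t + ε)) / ENNReal.ofReal (2 * ε))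
      (nhdsWithin 0 (Ioi 0)) (nhds 1))
    (d : ℝ) (hderiv : HasDerivAt u d t) :
    d = 0 := by
  set K : ℝ≥0 := Real.toNNReal G
  have hslope : Tendsto (fun ε => |u (t + ε) - u t| / ε) (𝓝[>] 0) (𝓝 |d|) := by
    refine (continuous_abs.tendsto d).comp hderiv.tendsto_slope_zero_right |>.congr' ?_
    filter_upwards [self_mem_nhdsWithin] with ε (hε : 0 < ε)
    simp [abs_mul, abs_of_pos hε, div_eq_inv_mul]
  have hsparse := tendsto_volumeReal_Icc_sdiff_div_of_density_one
    (hN.isClosed.preimage hLip.continuous).measurableSet hdens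
  have hbound : ∀ᶠ ε in 𝓝[>] 0, |u (t + ε) - u t| / ε ≤
      2 * K * (volume.real (Icc (t - ε) (t + ε) \ u ⁻¹' N) / (2 * ε)) := by
    filter_upwards [self_mem_nhdsWithin] with ε (hε : 0 < ε)
    calc |u (t + ε) - u t| / ε
        ≤ K * volume.real (Icc t (t + ε) \ u ⁻¹' N) / ε := by
          gcongr
          exact hLip.abs_sub_le_mul_volumeReal_Icc_sdiff_preimage hN0 (by linarith)
      _ ≤ K * volume.real (Icc (t - ε) (t + ε) \ u ⁻¹' N) / ε := by
          gcongr
          · exact measure_ne_top_of_subset sdiff_subset measure_Icc_lt_top.ne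
          · linarith
      _ = 2 * K * (volume.real (Icc (t - ε) (t + ε) \ u ⁻¹' N) / (2 * ε)) := by
          field_simp
  have hlim := hsparse.const_mul (2 * (K : ℝ))
  rw [mul_zero] at hlim
  exact abs_nonpos_iff.mp (le_of_tendsto_of_tendsto hslope hlim hbound)

theorem stmt_0 (u : ℝ → ℝ) (G : ℝ) (hG : 0 ≤ G)
    (hLip : LipschitzWith (Real.toNNReal G) u)
    (N : Set ℝ) (hN : IsCompact N) (hN0 : volume N = 0)
    (t : ℝ)
    (hdens : Tendsto (fun ε : ℝ =>
        volume (u ⁻¹' N ∩ Icc (t - ε) (t + ε)) / ENNReal.ofReal (2 * ε))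
      (nhdsWithin 0 (Ioi 0)) (nhds 1))
    (d : ℝ) (hderiv : HasDerivAt u d t) :
    d = 0 :=
  stmt_0_general u G hLip N hN hN0 t hdens d hderiv
end

section
/- Let u_i = -3·a_i/8 with a_i = 2^{-i-1}(1+2^{-i}), and let δ_i = (3/4)·2^{-2^{2(i+1)}}/(2^{3·2^{2i-1}} - 1). Then for every α > 0, the ratio |u_i|/δ_i^α tends to +∞ as i → ∞. Consequently a function attaining value u_i and value 0 at two points at distance at most δ_i cannot be α-Hölder continuous for any α > 0. -/
open Filter Topology

/-!
Since `|u i| ≥ (3/8) ε i` with `ε i = (1/2)^(i+1)`, while `δ i ≤ (1/2)^(4^(i+1))`, the doubly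
exponential decay of `δ i` beats any power: eventually `δ i ^ α ≤ ε i ^ 2`, so
`|u i| / δ i ^ α ≥ (3/8) / ε i → ∞`. An `α`-Hölder bound `|u i| ≤ C δ i ^ α` would keep the ratio
below `C`.
-/

lemma eventually_two_mul_le_mul_four_pow {α : ℝ} (hα : 0 < α) :
    ∀ᶠ n : ℕ in atTop, 2 * (n : ℝ) ≤ α * 4 ^ n := by
  filter_upwards [(isLittleO_coe_const_pow_of_one_lt (R := ℝ) (by norm_num : (1:ℝ) < 4)).bound
    (half_pos hα)] with n hn
  simp only [Real.norm_natCast, norm_pow, Real.norm_ofNat] at hn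
  linarith

lemma eventually_pow_two_pow_rpow_le_sq {r α : ℝ} (hr₀ : 0 < r) (hr₁ : r ≤ 1) (hα : 0 < α) :
    ∀ᶠ i : ℕ in atTop, (r ^ 2 ^ (2 * (i + 1))) ^ α ≤ (r ^ (i + 1)) ^ 2 := by
  filter_upwards [(tendsto_add_atTop_nat 1).eventually (eventually_two_mul_le_mul_four_pow hα)]
    with i hi
  rw [← Real.rpow_natCast _ (2 ^ _), ← Real.rpow_mul hr₀.le, ← pow_mul,
    ← Real.rpow_natCast _ ((i + 1) * 2)]
  refine Real.rpow_le_rpow_of_exponent_ge hr₀ hr₁ ?_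
  rw [pow_mul]
  push_cast at hi ⊢
  linarith

lemma tendsto_div_atTop_of_le_sq {f g ε : ℕ → ℝ} {c : ℝ} (hc : 0 < c)
    (hε : Tendsto ε atTop (𝓝[>] 0)) (hf : ∀ i, c * ε i ≤ f i) (hg_pos : ∀ i, 0 < g i)
    (hg : ∀ᶠ i in atTop, g i ≤ ε i ^ 2) :
    Tendsto (fun i ↦ f i / g i) atTop atTop := by
  refine tendsto_atTop_mono' _ ?_ (hε.inv_tendsto_nhdsGT_zero.const_mul_atTop hc)
  filter_upwards [hg, hε.eventually self_mem_nhdsWithin] with i hgi (hεi : 0 < ε i)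
  calc c * (ε i)⁻¹ = c * ε i / ε i ^ 2 := by field_simp
    _ ≤ f i / g i := div_le_div₀ (by linarith [hf i, mul_pos hc hεi]) (hf i) (hg_pos i) hgi

lemma not_forall_le_mul_of_tendsto_div_atTop {x y : ℕ → ℝ} (hy : ∀ i, 0 < y i)
    (h : Tendsto (fun i ↦ x i / y i) atTop atTop) (C : ℝ) (k : ℕ) :
    ¬ ∀ i, k ≤ i → x i ≤ C * y i := by
  intro hle
  obtain ⟨i, hi, hik⟩ := ((h.eventually_gt_atTop C).and (eventually_ge_atTop k)).exists
  exact (hle i hik).not_gt ((lt_div_iff₀ (hy i)).mp hi)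

lemma three_quarters_mul_div_two_pow_sub_one_mem_Ioc {p : ℝ} (hp : 0 < p) {n : ℕ} (hn : n ≠ 0) :
    3 / 4 * p / (2 ^ n - 1) ∈ Set.Ioc 0 p := by
  have hd : (1 : ℝ) ≤ 2 ^ n - 1 := by
    have h2 : (2 : ℝ) ^ 1 ≤ 2 ^ n :=
      pow_le_pow_right₀ (by norm_num) (Nat.one_le_iff_ne_zero.mpr hn)
    linarith
  exact ⟨by positivity, (div_le_self (by positivity) hd).trans (by linarith)⟩

theorem stmt_16 (a u δ : ℕ → ℝ)
    (ha : ∀ i : ℕ, a i = ((1:ℝ)/2) ^ (i + 1) * (1 + ((1:ℝ)/2) ^ i))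
    (hu : ∀ i : ℕ, u i = -3 * a i / 8)
    (hδ : ∀ i : ℕ, δ i = (3/4) * ((1:ℝ)/2) ^ (2 ^ (2 * (i + 1))) /
      ((2:ℝ) ^ (3 * 2 ^ (2 * i - 1)) - 1)) :
    ∀ α : ℝ, 0 < α →
      Tendsto (fun i : ℕ => |u i| / (δ i) ^ α) atTop atTop ∧
      ∀ C : ℝ, ¬ (∀ i : ℕ, 1 ≤ i → |u i| ≤ C * (δ i) ^ α) := by
  intro α hα
  have hδ_mem (i : ℕ) : δ i ∈ Set.Ioc 0 (((1:ℝ)/2) ^ (2 ^ (2 * (i + 1)))) :=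
    hδ i ▸ three_quarters_mul_div_two_pow_sub_one_mem_Ioc (by positivity) (by positivity)
  have hu_ge (i : ℕ) : 3 / 8 * ((1:ℝ)/2) ^ (i + 1) ≤ |u i| := by
    have hpow : (0:ℝ) ≤ ((1:ℝ)/2) ^ i := by positivity
    rw [hu i, ha i, neg_mul, neg_div, abs_neg, abs_of_nonneg (by positivity)]
    nlinarith [pow_pos (by norm_num : (0:ℝ) < 1/2) (i + 1)]
  have hδα_pos (i : ℕ) : 0 < δ i ^ α := Real.rpow_pos_of_pos (hδ_mem i).1 α
  have hδα_le : ∀ᶠ i in atTop, δ i ^ α ≤ (((1:ℝ)/2) ^ (i + 1)) ^ 2 := by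
    filter_upwards [eventually_pow_two_pow_rpow_le_sq (r := 1 / 2) (by norm_num) (by norm_num) hα]
      with i hi
    exact (Real.rpow_le_rpow (hδ_mem i).1.le (hδ_mem i).2 hα.le).trans hi
  have hε : Tendsto (fun i : ℕ ↦ ((1:ℝ)/2) ^ (i + 1)) atTop (𝓝[>] 0) :=
    (tendsto_pow_atTop_nhdsWithin_zero_of_lt_one (by norm_num) (by norm_num)).comp
      (tendsto_add_atTop_nat 1)
  have hlim := tendsto_div_atTop_of_le_sq (by norm_num) hε hu_ge hδα_pos hδα_le
  exact ⟨hlim, fun C ↦ not_forall_le_mul_of_tendsto_div_atTop hδα_pos hlim C 1⟩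
end

section
/- Let F be a family of continuous functions γ : ℝ → ℝ which is totally ordered by pointwise comparison (for any γ₁, γ₂ ∈ F, either γ₁ ≤ γ₂ everywhere or γ₂ ≤ γ₁ everywhere). Fix a countable dense sequence (t_k) in ℝ. Then the map θ : F → (-2,2) defined by θ(γ) = ∑_{k=0}^∞ tanh(γ(t_k))/2^k is strictly order preserving: γ₁ < γ₂ pointwise somewhere (with γ₁ ≤ γ₂ everywhere) implies θ(γ₁) < θ(γ₂). -/
open Real

theorem Real.tanh_strictMono : StrictMono tanh := fun a b hab =>
  lt_of_not_ge fun hba => hab.not_ge <| by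
    simpa only [artanh_tanh] using artanh_le_artanh (neg_one_lt_tanh b) (tanh_lt_one a) hba

section GeometricWeights

variable {a b : ℕ → ℝ} {C : ℝ}

theorem summable_div_two_pow_of_abs_le (ha : ∀ k, |a k| ≤ C) :
    Summable fun k => a k / 2 ^ k :=
  (summable_geometric_two.mul_left C).of_norm_bounded fun k => by
    rw [norm_div, norm_pow, Real.norm_eq_abs, Real.norm_two, one_div, inv_pow, div_eq_mul_inv]
    gcongr
    exact ha k

theorem tsum_div_two_pow_lt_tsum (ha : ∀ k, |a k| ≤ C) (hb : ∀ k, |b k| ≤ C)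
    (hle : ∀ k, a k ≤ b k) {i : ℕ} (hi : a i < b i) :
    ∑' k, a k / 2 ^ k < ∑' k, b k / 2 ^ k :=
  Summable.tsum_lt_tsum (fun k => by gcongr; exact hle k) (by gcongr)
    (summable_div_two_pow_of_abs_le ha) (summable_div_two_pow_of_abs_le hb)

end GeometricWeights

theorem stmt_17_general (F : Set (ℝ → ℝ))
    (hcont : ∀ γ ∈ F, Continuous γ)
    (t : ℕ → ℝ) (hdense : DenseRange t) :
    ∀ γ₁ ∈ F, ∀ γ₂ ∈ F, (∀ s, γ₁ s ≤ γ₂ s) → (∃ s, γ₁ s < γ₂ s) →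
      (∑' k : ℕ, Real.tanh (γ₁ (t k)) / 2 ^ k) <
      (∑' k : ℕ, Real.tanh (γ₂ (t k)) / 2 ^ k) := by
  intro γ₁ h₁ γ₂ h₂ hle ⟨s, hs⟩
  obtain ⟨k, hk⟩ : ∃ k, γ₁ (t k) < γ₂ (t k) :=
    hdense.exists_mem_open (isOpen_lt (hcont γ₁ h₁) (hcont γ₂ h₂)) ⟨s, hs⟩
  exact tsum_div_two_pow_lt_tsum (fun _ => (abs_tanh_lt_one _).le)
    (fun _ => (abs_tanh_lt_one _).le) (fun j => tanh_strictMono.monotone (hle (t j)))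
    (tanh_strictMono hk)

theorem stmt_17 (F : Set (ℝ → ℝ))
    (hcont : ∀ γ ∈ F, Continuous γ)
    (htotal : ∀ γ₁ ∈ F, ∀ γ₂ ∈ F, (∀ t, γ₁ t ≤ γ₂ t) ∨ (∀ t, γ₂ t ≤ γ₁ t))
    (t : ℕ → ℝ) (hdense : DenseRange t) :
    ∀ γ₁ ∈ F, ∀ γ₂ ∈ F, (∀ s, γ₁ s ≤ γ₂ s) → (∃ s, γ₁ s < γ₂ s) →
      (∑' k : ℕ, Real.tanh (γ₁ (t k)) / 2 ^ k) <
      (∑' k : ℕ, Real.tanh (γ₂ (t k)) / 2 ^ k) :=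
  stmt_17_general F hcont t hdense
end
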